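/- Let n ≥ 2 be an integer and let S be a finite set with exactly n + 2 elements. Let M be the integer matrix indexed by the n-element subsets of S defined by M(I, K) = 1 if |I ∩ K| = n − 2 and M(I, K) = 0 otherwise, and let 𝟙 be the all-ones matrix of the same size. Then M² + (n − 2)·M − (n − 1)·Id = ((n − 1)(n − 2)/2)·𝟙. -/
import Mathlib

open Matrix Finset

private lemma inter_card_iff' {α : Type*} [Fintype α] [DecidableEq α] {n : ℕ}
    (hn : 2 ≤ n) (hcard : Fintype.card α = n + 2) {A B : Finset α}
    (hA : A.card = n) (hB : B.card = n) :
    (A ∩ B).card = n - 2 ↔ Aᶜ ⊆ B := by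
  have h1 := Finset.card_inter_add_card_union A B
  have h2 : (A ∪ B).card ≤ n + 2 := hcard ▸ Finset.card_le_univ _
  have key : Aᶜ ⊆ B ↔ A ∪ B = Finset.univ := by
    constructor
    · intro h
      apply Finset.eq_univ_of_forall
      intro x
      by_cases hx : x ∈ A
      · exact Finset.mem_union_left _ hx
      · exact Finset.mem_union_right _ (h (Finset.mem_compl.2 hx))
    · intro h x hx
      rcases Finset.mem_union.1 (h ▸ Finset.mem_univ x) with h' | h'
      · exact absurd h' (Finset.mem_compl.1 hx)
      · exact h'
  rw [key]
  constructor
  · intro h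
    apply Finset.eq_univ_of_card
    omega
  · intro h
    have : (A ∪ B).card = n + 2 := by rw [h, Finset.card_univ, hcard]
    omega

private lemma count_supersets' {α : Type*} [Fintype α] [DecidableEq α] {n : ℕ}
    (hcard : Fintype.card α = n + 2) (T : Finset α) :
    (Finset.univ.filter
      (fun J : {J : Finset α // J.card = n} => Tᶜ ⊆ (J : Finset α))).card
      = T.card.choose 2 := by
  rw [← Finset.card_powersetCard 2 T]
  refine Finset.card_bij (fun J _ => (J : Finset α)ᶜ) ?_ ?_ ?_
  · intro J hJ
    rw [Finset.mem_powersetCard]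
    have hJ' : Tᶜ ⊆ (J : Finset α) := (Finset.mem_filter.1 hJ).2
    constructor
    · intro x hx
      by_contra hxT
      exact (Finset.mem_compl.1 hx) (hJ' (Finset.mem_compl.2 hxT))
    · rw [Finset.card_compl, J.2, hcard]
      omega
  · intro J₁ h₁ J₂ h₂ h
    exact Subtype.ext (by simpa using congrArg (·ᶜ) h)
  · intro P hP
    rw [Finset.mem_powersetCard] at hP
    refine ⟨⟨Pᶜ, ?_⟩, ?_, ?_⟩
    · rw [Finset.card_compl, hP.2, hcard]
      omega
    · simp only [Finset.mem_filter, Finset.mem_univ, true_and]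
      intro x hx
      exact Finset.mem_compl.2 fun hxP => (Finset.mem_compl.1 hx) (hP.1 hxP)
    · simp

/-- Let `S` be a finite set with `n + 2` elements (`n ≥ 2`), and let `M` be the integer
matrix indexed by the `n`-element subsets of `S` with `M I K = 1` if `|I ∩ K| = n - 2`
and `M I K = 0` otherwise. Then `M² + (n - 2)·M - (n - 1)·Id = ((n-1)(n-2)/2)·𝟙`,
where `𝟙` is the all-ones matrix. -/
theorem correspondence_matrix_quadratic {α : Type*} [Fintype α] [DecidableEq α]
    (n : ℕ) (hn : 2 ≤ n) (hcard : Fintype.card α = n + 2)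
    (M : Matrix {I : Finset α // I.card = n} {I : Finset α // I.card = n} ℤ)
    (hM : ∀ I K : {I : Finset α // I.card = n},
      M I K = if ((I : Finset α) ∩ (K : Finset α)).card = n - 2 then 1 else 0) :
    M * M + ((n : ℤ) - 2) • M - ((n : ℤ) - 1) • (1 : Matrix _ _ ℤ)
      = (((n - 1) * (n - 2) / 2 : ℕ) : ℤ) • Matrix.of (fun _ _ => (1 : ℤ)) := by
  ext I K
  simp only [Matrix.add_apply, Matrix.sub_apply, Matrix.smul_apply, Matrix.mul_apply,
    Matrix.one_apply, Matrix.of_apply, smul_eq_mul, mul_one]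
  set t := ((I : Finset α) ∩ (K : Finset α)).card with ht
  -- the quadratic sum
  have step : ∀ J : {J : Finset α // J.card = n},
      M I J * M J K = if ((I : Finset α) ∩ (K : Finset α))ᶜ ⊆ (J : Finset α) then 1 else 0 := by
    intro J
    rw [hM, hM]
    have e1 := inter_card_iff' hn hcard I.2 J.2
    have e2 : (((J : Finset α)) ∩ (K : Finset α)).card = n - 2 ↔ (K : Finset α)ᶜ ⊆ (J : Finset α) := by
      rw [Finset.inter_comm]; exact inter_card_iff' hn hcard K.2 J.2
    by_cases h1 : ((I : Finset α) ∩ (J : Finset α)).card = n - 2 <;>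
      by_cases h2 : (((J : Finset α)) ∩ (K : Finset α)).card = n - 2
    all_goals
      simp only [h1, h2, if_true, if_false, one_mul, zero_mul, mul_one, mul_zero, if_pos, if_neg]
    · rw [if_pos]
      rw [Finset.compl_inter]
      exact Finset.union_subset (e1.1 h1) (e2.1 h2)
    · rw [if_neg]
      rw [Finset.compl_inter, Finset.union_subset_iff]
      intro hc
      exact h2 (e2.2 hc.2)
    · rw [if_neg]
      rw [Finset.compl_inter, Finset.union_subset_iff]
      intro hc
      exact h1 (e1.2 hc.1)
    · rw [if_neg]
      rw [Finset.compl_inter, Finset.union_subset_iff]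
      intro hc
      exact h1 (e1.2 hc.1)
  have hsum : (∑ J, M I J * M J K) = (t.choose 2 : ℤ) := by
    rw [Finset.sum_congr rfl (fun J _ => step J), Finset.sum_boole,
      count_supersets' hcard]
  -- identity entry
  have hid : (I = K) ↔ t = n := by
    constructor
    · rintro rfl
      rw [ht, Finset.inter_self, I.2]
    · intro h
      have h1 : (I : Finset α) ∩ (K : Finset α) = (I : Finset α) :=
        Finset.eq_of_subset_of_card_le Finset.inter_subset_left (by rw [I.2, ← ht, h])
      have h2 : (I : Finset α) ∩ (K : Finset α) = (K : Finset α) :=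
        Finset.eq_of_subset_of_card_le Finset.inter_subset_right (by rw [K.2, ← ht, h])
      exact Subtype.ext (h1 ▸ h2)
  -- bounds on t
  have hb1 : t ≤ n := I.2 ▸ Finset.card_le_card Finset.inter_subset_left
  have hb2 : n - 2 ≤ t := by
    have h1 := Finset.card_inter_add_card_union (I : Finset α) (K : Finset α)
    have h2 : ((I : Finset α) ∪ (K : Finset α)).card ≤ n + 2 :=
      hcard ▸ Finset.card_le_univ _
    rw [I.2, K.2] at h1
    omega
  rw [hsum, hM]
  obtain ⟨m, rfl⟩ : ∃ m, n = m + 2 := ⟨n - 2, by omega⟩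
  have hrhs : (m + 2 - 1) * (m + 2 - 2) / 2 = (m + 1).choose 2 := by
    rw [Nat.choose_two_right]
    norm_num
  have hpasc1 : (m + 2).choose 2 = (m + 1).choose 1 + (m + 1).choose 2 :=
    Nat.choose_succ_succ _ _
  have hpasc2 : (m + 1).choose 2 = m.choose 1 + m.choose 2 :=
    Nat.choose_succ_succ _ _
  rw [hrhs]
  have hb1' : t ≤ m + 2 := hb1
  have hb2' : m ≤ t := by omega
  clear_value t
  obtain rfl | rfl | rfl : t = m ∨ t = m + 1 ∨ t = m + 2 := by omega
  · -- t = m : M entry 1, id entry 0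
    rw [if_pos (by omega), if_neg (by rw [hid]; omega)]
    push_cast [hpasc2, Nat.choose_one_right]
    ring
  · -- t = m + 1
    rw [if_neg (by omega), if_neg (by rw [hid]; omega)]
    push_cast
    ring
  · -- t = m + 2
    rw [if_neg (by omega), if_pos (hid.2 rfl)]
    push_cast [hpasc1, Nat.choose_one_right]
    ring
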